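/- Last-iterate convergence of TD(0) with exponentially decaying step-sizes under i.i.d. sampling: fix T ≥ 3, set α = (1/T)^{1/T}, η₀ = (1−γ)/8, and η_t = η₀ α^t. Let ((s_t, s_t'))_{t≥1} be i.i.d. random pairs with joint law ℙ(s_t = s, s_t' = s') = μ(s)P(s,s'), and define random iterates w_{t+1} = w_t + η_t g_{s_t, s_t'}(w_t) from a deterministic w_1 ∈ ℝ^d. Then E[‖w_{T+1} − w*‖²] ≤ e · ‖w_1 − w*‖² · exp(−η₀ ω (1−γ) · αT / ln T) + (8σ²/(e · (ω(1−γ))²)) · (ln T)²/(α² T), where σ² = ∑_{s,s'} μ(s)P(s,s') ‖g_{s,s'}(w*)‖². -/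

import Mathlib

open scoped RealInnerProductSpace BigOperators
open MeasureTheory

/-- The TD(0) update direction for a transition `(s, s')`:
`g_{s,s'}(w) = (r(s) + γ ⟪w, φ s'⟫ − ⟪w, φ s⟫) φ(s)`. -/
noncomputable def tdDir {S : Type*} {d : ℕ} (φ : S → EuclideanSpace ℝ (Fin d))
    (r : S → ℝ) (γ : ℝ) (s s' : S) (w : EuclideanSpace ℝ (Fin d)) :
    EuclideanSpace ℝ (Fin d) :=
  (r s + γ * ⟪w, φ s'⟫ - ⟪w, φ s⟫) • φ s

/-- The mean-path TD(0) direction `g(w) = ∑_{s,s'} μ(s) P(s,s') g_{s,s'}(w)`. -/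
noncomputable def meanDir {S : Type*} [Fintype S] {d : ℕ}
    (P : S → S → ℝ) (μ : S → ℝ) (φ : S → EuclideanSpace ℝ (Fin d))
    (r : S → ℝ) (γ : ℝ) (w : EuclideanSpace ℝ (Fin d)) :
    EuclideanSpace ℝ (Fin d) :=
  ∑ s, ∑ s', (μ s * P s s') • tdDir φ r γ s s' w

/-!
One TD(0) step `u ↦ u + η g_{s,s'}(u)` with `8η ≤ 1 - γ` contracts in mean square:
`E‖u + η g(u) - w*‖² ≤ (1 - ηω(1-γ))‖u - w*‖² + 2η²σ²`. Since by stationarity `s'` is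
distributed like `s`, AM-GM gives `⟪u - w*, ḡ(u) - ḡ(w*)⟫ ≤ -(1-γ)‖u - w*‖²_μ` for the mean
path `ḡ`, where `‖v‖²_μ = ∑ μ(s)⟪v, φ s⟫²`; the bounded features make the second-order term at
most `8η²‖u - w*‖²_μ + 2η²σ²`, and `ω` turns `‖·‖_μ` into the Euclidean norm.

As `w_{t+1}` is a function of the first `t` i.i.d. samples, the errors `e_t = E‖w_{t+1} - w*‖²`
obey `e_t ≤ (1 - βη_t) e_{t-1} + 2η_t²σ²` with `β = ω(1-γ)`, hence
`e_T ≤ ∏_t (1 - βη_t) e_0 + ∑_t 2η_t²σ² ∏_{j>t} (1 - βη_j)`. For `η_t = η₀α^t` a geometric sum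
gives `∏_{t<j≤T} (1 - βη_j) ≤ exp(c(α^T - α^t))` with `c = βη₀α/(1-α) ≥ βη₀αT/ln T` and
`cα^T = c/T ≤ 1`; the noise terms are then bounded through `y² e^{-cy} ≤ 4/(ec)²`.
-/

open Finset

section Sampling

variable {Ω ι : Type*} [MeasurableSpace Ω] [Fintype ι] {ℙ : Measure Ω} [IsFiniteMeasure ℙ]

/-- The fibres need not be measurable; but their measurable hulls cover the space with total mass
at most `ℙ univ`, so any two of them overlap only in a null set. -/
theorem nullMeasurableSet_preimage_singleton_of_sum_measure_le (κ : Ω → ι)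
    (hκ : ∑ i, ℙ (κ ⁻¹' {i}) ≤ ℙ Set.univ) (i : ι) : NullMeasurableSet (κ ⁻¹' {i}) ℙ := by
  classical
  set B : ι → Set Ω := fun j => toMeasurable ℙ (κ ⁻¹' {j})
  set U : Set Ω := ⋃ j ∈ univ.erase i, B j
  have hUB : ∀ ω, κ ω ≠ i → ω ∈ U := fun ω h =>
    Set.mem_biUnion (mem_erase.2 ⟨h, mem_univ _⟩) (subset_toMeasurable _ _ rfl)
  have hcover : B i ∪ U = Set.univ := by
    refine Set.eq_univ_of_forall fun ω => ?_
    by_cases h : κ ω = i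
    · exact Or.inl (subset_toMeasurable _ _ h)
    · exact Or.inr (hUB ω h)
  have hoverlap : ℙ (B i ∩ U) = 0 := by
    have hU : ℙ U ≤ ∑ j ∈ univ.erase i, ℙ (κ ⁻¹' {j}) :=
      (measure_biUnion_finset_le _ _).trans_eq (by simp only [B, measure_toMeasurable])
    have hsum : ℙ (B i ∪ U) + ℙ (B i ∩ U) ≤ ℙ (B i ∪ U) + 0 := by
      rw [measure_union_add_inter _
          (measurableSet_biUnion _ fun j _ => measurableSet_toMeasurable _ _), hcover, add_zero]
      calc ℙ (B i) + ℙ U ≤ ℙ (κ ⁻¹' {i}) + ∑ j ∈ univ.erase i, ℙ (κ ⁻¹' {j}) := by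
            rw [measure_toMeasurable]; gcongr
        _ = ∑ j, ℙ (κ ⁻¹' {j}) := add_sum_erase _ (fun j => ℙ (κ ⁻¹' {j})) (mem_univ i)
        _ ≤ ℙ Set.univ := hκ
    exact le_zero_iff.1 ((ENNReal.add_le_add_iff_left (measure_ne_top _ _)).1 hsum)
  have hdiff : B i \ κ ⁻¹' {i} ⊆ B i ∩ U := fun ω hω => ⟨hω.1, hUB ω hω.2⟩
  refine (measurableSet_toMeasurable ℙ (κ ⁻¹' {i})).nullMeasurableSet.congr
    (ae_eq_set.2 ⟨measure_mono_null hdiff hoverlap, ?_⟩)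
  simp [Set.sdiff_eq_empty.2 (subset_toMeasurable ℙ _)]

theorem integral_comp_eq_sum_of_sum_measure_le (κ : Ω → ι)
    (hκ : ∑ i, ℙ (κ ⁻¹' {i}) ≤ ℙ Set.univ) (F : ι → ℝ) :
    ∫ ω, F (κ ω) ∂ℙ = ∑ i, ℙ.real (κ ⁻¹' {i}) * F i := by
  classical
  have hnull := nullMeasurableSet_preimage_singleton_of_sum_measure_le κ hκ
  have hF : (fun ω => F (κ ω)) = fun ω => ∑ i, (κ ⁻¹' {i}).indicator (fun _ => F i) ω := by
    ext ω
    simp [Set.indicator_apply]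
  rw [hF, integral_finsetSum _ fun i _ => (integrable_const (F i)).indicator₀ (hnull i)]
  simp only [integral_indicator₀ (hnull _), setIntegral_const, smul_eq_mul]

end Sampling

section SamplePaths

variable {X : Type*}

/-- Index `i` holds the sample of time `i + 1`: sample paths start at time `1`. -/
def pathPrefix (n : ℕ) (σ : ℕ → X) : Fin n → X := fun i => σ (i + 1)

theorem preimage_pathPrefix_singleton (n : ℕ) (σ₀ : ℕ → X) :
    pathPrefix n ⁻¹' {pathPrefix n σ₀} = {σ | ∀ i, 1 ≤ i → i ≤ n → σ i = σ₀ i} := by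
  ext σ
  simp only [Set.mem_preimage, Set.mem_singleton_iff, funext_iff, pathPrefix, Set.mem_ofPred_eq]
  constructor
  · intro h i hi1 hin
    obtain ⟨j, rfl⟩ : ∃ j, i = j + 1 := ⟨i - 1, by omega⟩
    exact h ⟨j, by omega⟩
  · exact fun h i => h _ (by omega) (by omega)

theorem pathPrefix_surjective [Nonempty X] (n : ℕ) : Function.Surjective (pathPrefix (X := X) n) :=
  fun q => ⟨fun j => if h : j - 1 < n then q ⟨j - 1, h⟩ else Classical.arbitrary X,
    funext fun i => by simp [pathPrefix]⟩

theorem prod_pathPrefix {M : Type*} [CommMonoid M] (f : X → M) (n : ℕ) (σ : ℕ → X) :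
    ∏ i, f (pathPrefix n σ i) = ∏ i ∈ Icc 1 n, f (σ i) := by
  change ∏ i : Fin n, f (σ (i + 1)) = _
  rw [Fin.prod_univ_eq_prod_range (fun i => f (σ (i + 1))), range_eq_Ico,
    prod_Ico_add' (fun i => f (σ i)), ← Ico_add_one_right_eq_Icc, zero_add]

/-- The state after `n` steps of `u ↦ step t x u`, where step `t` uses the sample `q (t - 1)`. -/
def iterateSamples {E : Type*} (step : ℕ → X → E → E) (w₁ : E) : (n : ℕ) → (Fin n → X) → E
  | 0, _ => w₁
  | n + 1, q => step (n + 1) (q (Fin.last n)) (iterateSamples step w₁ n (Fin.init q))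

theorem iterateSamples_snoc {E : Type*} (step : ℕ → X → E → E) (w₁ : E) (n : ℕ)
    (q : Fin n → X) (x : X) :
    iterateSamples step w₁ (n + 1) (Fin.snoc q x) =
      step (n + 1) x (iterateSamples step w₁ n q) := by
  simp [iterateSamples]

theorem eq_iterateSamples_pathPrefix {E : Type*} (step : ℕ → X → E → E) (w₁ : E)
    (w : ℕ → (ℕ → X) → E) (hw₁ : ∀ σ, w 1 σ = w₁)
    (hw : ∀ t, 1 ≤ t → ∀ σ, w (t + 1) σ = step t (σ t) (w t σ)) (n : ℕ) (σ : ℕ → X) :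
    w (n + 1) σ = iterateSamples step w₁ n (pathPrefix n σ) := by
  induction n with
  | zero => exact hw₁ σ
  | succ n ih =>
    rw [hw (n + 1) (by omega), ih]
    rfl

variable [Fintype X]

def pathExpect (p : X → ℝ) (n : ℕ) (F : (Fin n → X) → ℝ) : ℝ :=
  ∑ q : Fin n → X, (∏ i, p (q i)) * F q

theorem sum_prod_apply_eq_one {p : X → ℝ} (hp : ∑ x, p x = 1) (n : ℕ) :
    ∑ q : Fin n → X, ∏ i, p (q i) = 1 := by
  rw [← Fintype.sum_pow, hp, one_pow]

theorem pathExpect_zero (p : X → ℝ) (F : (Fin 0 → X) → ℝ) :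
    pathExpect p 0 F = F Fin.elim0 := by
  simp [pathExpect, Subsingleton.elim _ (Fin.elim0 : Fin 0 → X)]

theorem pathExpect_succ (p : X → ℝ) (n : ℕ) (F : (Fin (n + 1) → X) → ℝ) :
    pathExpect p (n + 1) F = pathExpect p n fun q => ∑ x, p x * F (Fin.snoc q x) := by
  simp only [pathExpect, mul_sum]
  rw [← (Fin.snocEquiv fun _ => X).sum_comp, Fintype.sum_prod_type, sum_comm]
  refine Fintype.sum_congr _ _ fun q => Fintype.sum_congr _ _ fun x => ?_
  simp [Fin.snocEquiv, Fin.prod_univ_castSucc, mul_comm, mul_left_comm, mul_assoc]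

theorem pathExpect_le_mul_add {p : X → ℝ} (hp0 : ∀ x, 0 ≤ p x) (hp : ∑ x, p x = 1) {n : ℕ}
    {F G : (Fin n → X) → ℝ} {a b : ℝ} (hFG : ∀ q, F q ≤ a * G q + b) :
    pathExpect p n F ≤ a * pathExpect p n G + b := by
  calc pathExpect p n F ≤ ∑ q : Fin n → X, (∏ i, p (q i)) * (a * G q + b) :=
        sum_le_sum fun q _ => mul_le_mul_of_nonneg_left (hFG q) (prod_nonneg fun i _ => hp0 _)
    _ = a * pathExpect p n G + b := by
        simp only [pathExpect, mul_add, sum_add_distrib, mul_sum, ← sum_mul,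
          sum_prod_apply_eq_one hp, one_mul, mul_left_comm]

theorem pathExpect_iterateSamples_succ_le {E : Type*} (step : ℕ → X → E → E) (w₁ : E)
    (V : E → ℝ) {p : X → ℝ} (hp0 : ∀ x, 0 ≤ p x) (hp : ∑ x, p x = 1) {a b : ℝ} {n : ℕ}
    (hdrift : ∀ u, ∑ x, p x * V (step (n + 1) x u) ≤ a * V u + b) :
    pathExpect p (n + 1) (fun q => V (iterateSamples step w₁ (n + 1) q)) ≤
      a * pathExpect p n (fun q => V (iterateSamples step w₁ n q)) + b := by
  rw [pathExpect_succ]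
  simp only [iterateSamples_snoc]
  exact pathExpect_le_mul_add hp0 hp fun q => hdrift _

theorem integral_comp_pathPrefix [MeasurableSpace X] [Nonempty X] {p : X → ℝ}
    (hp0 : ∀ x, 0 ≤ p x) (hp : ∑ x, p x = 1) {ℙ : Measure (ℕ → X)} [IsProbabilityMeasure ℙ]
    (hℙ : ∀ (n : ℕ) (σ₀ : ℕ → X), ℙ {σ | ∀ i, 1 ≤ i → i ≤ n → σ i = σ₀ i} =
      ∏ i ∈ Icc 1 n, ENNReal.ofReal (p (σ₀ i)))
    (n : ℕ) (F : (Fin n → X) → ℝ) :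
    ∫ σ, F (pathPrefix n σ) ∂ℙ = pathExpect p n F := by
  have hfibre : ∀ q, ℙ (pathPrefix n ⁻¹' {q}) = ENNReal.ofReal (∏ i, p (q i)) := by
    intro q
    obtain ⟨σ₀, rfl⟩ := pathPrefix_surjective n q
    rw [preimage_pathPrefix_singleton, hℙ, ENNReal.ofReal_prod_of_nonneg fun i _ => hp0 _]
    exact (prod_pathPrefix (fun x => ENNReal.ofReal (p x)) n σ₀).symm
  have hsum : ∑ q, ℙ (pathPrefix n ⁻¹' {q}) ≤ ℙ Set.univ := by
    simp_rw [hfibre]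
    rw [← ENNReal.ofReal_sum_of_nonneg fun q _ => prod_nonneg fun i _ => hp0 _,
      sum_prod_apply_eq_one hp, ENNReal.ofReal_one, measure_univ]
  rw [integral_comp_eq_sum_of_sum_measure_le _ hsum]
  refine Fintype.sum_congr _ _ fun q => ?_
  rw [measureReal_def, hfibre, ENNReal.toReal_ofReal (prod_nonneg fun i _ => hp0 _)]

end SamplePaths

theorem le_prod_mul_add_sum_of_le_mul_add {e D c : ℕ → ℝ} (hD : ∀ t, 0 ≤ D t)
    (he : ∀ n, e (n + 1) ≤ D (n + 1) * e n + c (n + 1)) (n : ℕ) :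
    e n ≤ (∏ t ∈ Ioc 0 n, D t) * e 0 + ∑ t ∈ Ioc 0 n, c t * ∏ j ∈ Ioc t n, D j := by
  induction n with
  | zero => simp
  | succ n ih =>
    have htail : ∀ t ∈ Ioc 0 n, c t * ∏ j ∈ Ioc t (n + 1), D j =
        D (n + 1) * (c t * ∏ j ∈ Ioc t n, D j) := fun t ht => by
      rw [prod_Ioc_succ_top (mem_Ioc.1 ht).2]; ring
    rw [prod_Ioc_succ_top n.zero_le, sum_Ioc_succ_top n.zero_le, sum_congr rfl htail,
      ← mul_sum, Ioc_self, prod_empty, mul_one]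
    nlinarith [he n, mul_le_mul_of_nonneg_left ih (hD (n + 1))]

section MeanPath

variable {S : Type*} {d : ℕ} {φ : S → EuclideanSpace ℝ (Fin d)} {r : S → ℝ} {γ : ℝ}

theorem tdDir_sub_tdDir (s s' : S) (u w : EuclideanSpace ℝ (Fin d)) :
    tdDir φ r γ s s' u - tdDir φ r γ s s' w =
      (γ * ⟪u - w, φ s'⟫ - ⟪u - w, φ s⟫) • φ s := by
  simp only [tdDir, ← sub_smul, inner_sub_left]
  ring_nf

variable [Fintype S] {P : S → S → ℝ} {μ : S → ℝ}

theorem inner_meanDir (v w : EuclideanSpace ℝ (Fin d)) :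
    ⟪v, meanDir P μ φ r γ w⟫ = ∑ s, ∑ s', μ s * P s s' * ⟪v, tdDir φ r γ s s' w⟫ := by
  simp only [meanDir, inner_sum, real_inner_smul_right]

theorem sum_sum_mul_fst (hProw : ∀ s, ∑ s', P s s' = 1) (f : S → ℝ) :
    ∑ s, ∑ s', μ s * P s s' * f s = ∑ s, μ s * f s := by
  refine Fintype.sum_congr _ _ fun s => ?_
  rw [← sum_mul, ← mul_sum, hProw, mul_one]

theorem sum_sum_mul_snd (hstat : ∀ s', ∑ s, μ s * P s s' = μ s') (f : S → ℝ) :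
    ∑ s, ∑ s', μ s * P s s' * f s' = ∑ s, μ s * f s := by
  rw [sum_comm]
  exact Fintype.sum_congr _ _ fun s' => by rw [← sum_mul, hstat]

theorem inner_meanDir_sub_meanDir_le (hP : ∀ s s', 0 ≤ P s s') (hμ : ∀ s, 0 ≤ μ s)
    (hProw : ∀ s, ∑ s', P s s' = 1) (hstat : ∀ s', ∑ s, μ s * P s s' = μ s') (hγ : 0 ≤ γ)
    (u w : EuclideanSpace ℝ (Fin d)) :
    ⟪u - w, meanDir P μ φ r γ u - meanDir P μ φ r γ w⟫ ≤
      -((1 - γ) * ∑ s, μ s * ⟪u - w, φ s⟫ ^ 2) := by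
  set a : S → ℝ := fun s => ⟪u - w, φ s⟫
  have hexpand : ⟪u - w, meanDir P μ φ r γ u - meanDir P μ φ r γ w⟫ =
      ∑ s, ∑ s', μ s * P s s' * ((γ * a s' - a s) * a s) := by
    simp only [meanDir, ← sum_sub_distrib, ← smul_sub, tdDir_sub_tdDir, inner_sum,
      real_inner_smul_right, smul_smul]
    simp only [a, mul_assoc]
  have hpt : ∀ s s', μ s * P s s' * ((γ * a s' - a s) * a s) ≤
      γ / 2 * (μ s * P s s' * a s' ^ 2) + (γ / 2 - 1) * (μ s * P s s' * a s ^ 2) := by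
    intro s s'
    have := mul_nonneg (mul_nonneg (hμ s) (hP s s')) (mul_nonneg hγ (sq_nonneg (a s' - a s)))
    nlinarith
  calc _ = _ := hexpand
    _ ≤ ∑ s, ∑ s', (γ / 2 * (μ s * P s s' * a s' ^ 2) + (γ / 2 - 1) * (μ s * P s s' * a s ^ 2)) :=
        sum_le_sum fun s _ => sum_le_sum fun s' _ => hpt s s'
    _ = _ := by
        simp only [sum_add_distrib, ← mul_sum, sum_sum_mul_fst hProw, sum_sum_mul_snd hstat]
        ring

theorem sum_sum_norm_tdDir_sub_tdDir_sq_le (hP : ∀ s s', 0 ≤ P s s') (hμ : ∀ s, 0 ≤ μ s)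
    (hProw : ∀ s, ∑ s', P s s' = 1) (hstat : ∀ s', ∑ s, μ s * P s s' = μ s')
    (hφ : ∀ s, ‖φ s‖ ≤ 1) (hγ0 : 0 ≤ γ) (hγ1 : γ ≤ 1) (u w : EuclideanSpace ℝ (Fin d)) :
    ∑ s, ∑ s', μ s * P s s' * ‖tdDir φ r γ s s' u - tdDir φ r γ s s' w‖ ^ 2 ≤
      4 * ∑ s, μ s * ⟪u - w, φ s⟫ ^ 2 := by
  set a : S → ℝ := fun s => ⟪u - w, φ s⟫
  have hpt : ∀ s s', ‖tdDir φ r γ s s' u - tdDir φ r γ s s' w‖ ^ 2 ≤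
      2 * a s' ^ 2 + 2 * a s ^ 2 := by
    intro s s'
    have hφs : ‖φ s‖ ^ 2 ≤ 1 := pow_le_one₀ (norm_nonneg _) (hφ s)
    rw [tdDir_sub_tdDir, norm_smul, mul_pow, Real.norm_eq_abs, sq_abs]
    have hγsq : γ ^ 2 ≤ 1 := pow_le_one₀ hγ0 hγ1
    nlinarith [sq_nonneg (γ * a s' + a s), sq_nonneg (a s'), sq_nonneg (γ * a s' - a s)]
  calc _ ≤ ∑ s, ∑ s', (2 * (μ s * P s s' * a s' ^ 2) + 2 * (μ s * P s s' * a s ^ 2)) :=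
        sum_le_sum fun s _ => sum_le_sum fun s' _ => by
          nlinarith [hpt s s', mul_nonneg (hμ s) (hP s s')]
    _ = _ := by
        simp only [sum_add_distrib, ← mul_sum, sum_sum_mul_fst hProw, sum_sum_mul_snd hstat]
        ring

theorem sum_sum_norm_add_smul_tdDir_sub_sq_le (hP : ∀ s s', 0 ≤ P s s') (hμ : ∀ s, 0 ≤ μ s)
    (hμsum : ∑ s, μ s = 1) (hProw : ∀ s, ∑ s', P s s' = 1)
    (hstat : ∀ s', ∑ s, μ s * P s s' = μ s') (hφ : ∀ s, ‖φ s‖ ≤ 1) (hγ0 : 0 ≤ γ) (hγ1 : γ ≤ 1)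
    {ω : ℝ} (hcov : ∀ v : EuclideanSpace ℝ (Fin d), ω * ‖v‖ ^ 2 ≤ ∑ s, μ s * ⟪v, φ s⟫ ^ 2)
    {wstar : EuclideanSpace ℝ (Fin d)} (hstar : meanDir P μ φ r γ wstar = 0)
    {η : ℝ} (hη0 : 0 ≤ η) (hη : 8 * η ≤ 1 - γ) (u : EuclideanSpace ℝ (Fin d)) :
    ∑ s, ∑ s', μ s * P s s' * ‖u + η • tdDir φ r γ s s' u - wstar‖ ^ 2 ≤
      (1 - η * (ω * (1 - γ))) * ‖u - wstar‖ ^ 2 +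
        2 * η ^ 2 * ∑ s, ∑ s', μ s * P s s' * ‖tdDir φ r γ s s' wstar‖ ^ 2 := by
  set v := u - wstar
  set g := tdDir φ r γ
  set Y := ∑ s, μ s * ⟪v, φ s⟫ ^ 2
  have hpt : ∀ s s', ‖u + η • g s s' u - wstar‖ ^ 2 ≤ ‖v‖ ^ 2 + 2 * η * ⟪v, g s s' u⟫ +
      2 * η ^ 2 * ‖g s s' u - g s s' wstar‖ ^ 2 + 2 * η ^ 2 * ‖g s s' wstar‖ ^ 2 := by
    intro s s'
    have htri := norm_add_le (g s s' u - g s s' wstar) (g s s' wstar)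
    rw [sub_add_cancel] at htri
    have hsplit := (pow_le_pow_left₀ (norm_nonneg _) htri 2).trans add_sq_le
    rw [add_sub_right_comm, norm_add_sq_real,
      real_inner_smul_right, norm_smul, mul_pow, Real.norm_eq_abs, sq_abs]
    nlinarith [sq_nonneg η]
  have hsum : ∑ s, ∑ s', μ s * P s s' * ‖u + η • g s s' u - wstar‖ ^ 2 ≤
      ‖v‖ ^ 2 + 2 * η * ⟪v, meanDir P μ φ r γ u - meanDir P μ φ r γ wstar⟫ +
        2 * η ^ 2 * ∑ s, ∑ s', μ s * P s s' * ‖g s s' u - g s s' wstar‖ ^ 2 +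
        2 * η ^ 2 * ∑ s, ∑ s', μ s * P s s' * ‖g s s' wstar‖ ^ 2 := by
    rw [hstar, sub_zero, inner_meanDir]
    calc _ ≤ ∑ s, ∑ s', (μ s * P s s' * ‖v‖ ^ 2 + 2 * η * (μ s * P s s' * ⟪v, g s s' u⟫) +
          2 * η ^ 2 * (μ s * P s s' * ‖g s s' u - g s s' wstar‖ ^ 2) +
          2 * η ^ 2 * (μ s * P s s' * ‖g s s' wstar‖ ^ 2)) :=
          sum_le_sum fun s _ => sum_le_sum fun s' _ => by
            nlinarith [hpt s s', mul_nonneg (hμ s) (hP s s')]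
      _ = _ := by
          simp only [sum_add_distrib, ← mul_sum, ← sum_mul, hProw, mul_one, hμsum, one_mul]
          rfl
  have hdrift := inner_meanDir_sub_meanDir_le (φ := φ) (r := r) hP hμ hProw hstat hγ0 u wstar
  have hnoise := sum_sum_norm_tdDir_sub_tdDir_sq_le (r := r) hP hμ hProw hstat hφ hγ0 hγ1 u wstar
  have hY : 0 ≤ Y := sum_nonneg fun s _ => mul_nonneg (hμ s) (sq_nonneg _)
  nlinarith [hcov v, mul_nonneg hη0 (sub_nonneg.2 hγ1),
    mul_nonneg (mul_nonneg hη0 hY) (sub_nonneg.2 hη)]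

end MeanPath

theorem integral_norm_td0_iterate_sub_sq_le {S : Type*} [Fintype S] [MeasurableSpace S] {d : ℕ}
    {P : S → S → ℝ} {μ : S → ℝ} {φ : S → EuclideanSpace ℝ (Fin d)} {r : S → ℝ} {γ ω : ℝ}
    {wstar : EuclideanSpace ℝ (Fin d)}
    (hP : ∀ s s', 0 ≤ P s s') (hProw : ∀ s, ∑ s', P s s' = 1)
    (hμ : ∀ s, 0 ≤ μ s) (hμsum : ∑ s, μ s = 1) (hstat : ∀ s', ∑ s, μ s * P s s' = μ s')
    (hφ : ∀ s, ‖φ s‖ ≤ 1) (hγ0 : 0 ≤ γ) (hγ1 : γ ≤ 1) (hω : ω ≤ 1)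
    (hcov : ∀ v : EuclideanSpace ℝ (Fin d), ω * ‖v‖ ^ 2 ≤ ∑ s, μ s * ⟪v, φ s⟫ ^ 2)
    (hstar : meanDir P μ φ r γ wstar = 0)
    {η : ℕ → ℝ} (hη0 : ∀ t, 0 ≤ η t) (hη : ∀ t, 8 * η t ≤ 1 - γ)
    {ℙ : Measure (ℕ → S × S)} [IsProbabilityMeasure ℙ]
    (hiid : ∀ (n : ℕ) (q : ℕ → S × S),
      ℙ {σ | ∀ i, 1 ≤ i → i ≤ n → σ i = q i} =
        ∏ i ∈ Icc 1 n, ENNReal.ofReal (μ (q i).1 * P (q i).1 (q i).2))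
    {w1 : EuclideanSpace ℝ (Fin d)} {w : ℕ → (ℕ → S × S) → EuclideanSpace ℝ (Fin d)}
    (hw1 : ∀ σ, w 1 σ = w1)
    (hrec : ∀ t, 1 ≤ t → ∀ σ, w (t + 1) σ = w t σ + η t • tdDir φ r γ (σ t).1 (σ t).2 (w t σ))
    (n : ℕ) :
    ∫ σ, ‖w (n + 1) σ - wstar‖ ^ 2 ∂ℙ ≤
      (∏ t ∈ Ioc 0 n, (1 - η t * (ω * (1 - γ)))) * ‖w1 - wstar‖ ^ 2 +
        ∑ t ∈ Ioc 0 n, 2 * η t ^ 2 * (∑ s, ∑ s', μ s * P s s' * ‖tdDir φ r γ s s' wstar‖ ^ 2) *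
          ∏ j ∈ Ioc t n, (1 - η j * (ω * (1 - γ))) := by
  have : Nonempty S := by
    by_contra h
    simp [not_nonempty_iff.1 h] at hμsum
  set p : S × S → ℝ := fun x => μ x.1 * P x.1 x.2
  have hp0 : ∀ x, 0 ≤ p x := fun x => mul_nonneg (hμ _) (hP _ _)
  have hp : ∑ x, p x = 1 := by
    rw [Fintype.sum_prod_type]
    simp only [p, ← mul_sum, hProw, mul_one, hμsum]
  set step : ℕ → S × S → EuclideanSpace ℝ (Fin d) → EuclideanSpace ℝ (Fin d) :=
    fun t x u => u + η t • tdDir φ r γ x.1 x.2 u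
  set e : ℕ → ℝ := fun n => pathExpect p n fun q => ‖iterateSamples step w1 n q - wstar‖ ^ 2
  have hint : ∫ σ, ‖w (n + 1) σ - wstar‖ ^ 2 ∂ℙ = e n := by
    simp_rw [eq_iterateSamples_pathPrefix step w1 w hw1 hrec]
    exact integral_comp_pathPrefix hp0 hp hiid n fun q =>
      ‖iterateSamples step w1 n q - wstar‖ ^ 2
  have he0 : e 0 = ‖w1 - wstar‖ ^ 2 := pathExpect_zero _ _
  have hD : ∀ t, 0 ≤ 1 - η t * (ω * (1 - γ)) := fun t => by
    nlinarith [hη0 t, hη t, mul_nonneg (mul_nonneg (hη0 t) (sub_nonneg.2 hγ1)) (sub_nonneg.2 hω)]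
  have he : ∀ n, e (n + 1) ≤ (1 - η (n + 1) * (ω * (1 - γ))) * e n +
      2 * η (n + 1) ^ 2 * ∑ s, ∑ s', μ s * P s s' * ‖tdDir φ r γ s s' wstar‖ ^ 2 := fun n =>
    pathExpect_iterateSamples_succ_le step w1 (fun u => ‖u - wstar‖ ^ 2) hp0 hp fun u => by
      rw [Fintype.sum_prod_type]
      exact sum_sum_norm_add_smul_tdDir_sub_sq_le hP hμ hμsum hProw hstat hφ hγ0 hγ1 hcov hstar
        (hη0 _) (hη _) u
  rw [hint, ← he0]
  exact le_prod_mul_add_sum_of_le_mul_add hD he n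

section Schedule

open Real

theorem prod_one_sub_le_exp_neg_sum {ι : Type*} (s : Finset ι) {a : ι → ℝ}
    (ha : ∀ i ∈ s, a i ≤ 1) : ∏ i ∈ s, (1 - a i) ≤ exp (-∑ i ∈ s, a i) := by
  rw [← sum_neg_distrib, exp_sum]
  exact prod_le_prod (fun i hi => sub_nonneg.2 (ha i hi)) fun i _ => one_sub_le_exp_neg _

theorem sum_Ioc_pow {α : ℝ} (hα : α ≠ 1) {a b : ℕ} (hab : a ≤ b) :
    ∑ j ∈ Ioc a b, α ^ j = α / (1 - α) * (α ^ a - α ^ b) := by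
  have h1 : 1 - α ≠ 0 := sub_ne_zero.2 (Ne.symm hα)
  rw [← Ico_add_one_add_one_eq_Ioc, geom_sum_Ico' hα (by omega), pow_succ, pow_succ]
  field_simp

theorem prod_one_sub_mul_pow_le {κ α : ℝ} (hκ1 : κ ≤ 1) (hα0 : 0 ≤ α)
    (hα1 : α < 1) {a b : ℕ} (hab : a ≤ b) :
    ∏ j ∈ Ioc a b, (1 - κ * α ^ j) ≤ exp (κ * α / (1 - α) * (α ^ b - α ^ a)) := by
  refine (prod_one_sub_le_exp_neg_sum _ fun j _ => ?_).trans_eq ?_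
  · exact mul_le_one₀ hκ1 (pow_nonneg hα0 j) (pow_le_one₀ hα0 hα1.le)
  · rw [← mul_sum, sum_Ioc_pow hα1.ne hab]
    ring_nf

theorem sq_mul_exp_neg_le {c y : ℝ} (hc : 0 < c) (hy : 0 ≤ y) :
    y ^ 2 * exp (-(c * y)) ≤ 4 / (exp 1 ^ 2 * c ^ 2) := by
  have hz : c * y / 2 ≤ exp (c * y / 2 - 1) := by linarith [add_one_le_exp (c * y / 2 - 1)]
  have hsq : (c * y / 2) ^ 2 ≤ exp (c * y) / exp 1 ^ 2 := by
    calc (c * y / 2) ^ 2 ≤ exp (c * y / 2 - 1) ^ 2 := pow_le_pow_left₀ (by positivity) hz 2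
      _ = exp (c * y) / exp 1 ^ 2 := by rw [← exp_nat_mul, ← exp_nat_mul, ← exp_sub]; ring_nf
  calc y ^ 2 * exp (-(c * y)) = 4 / c ^ 2 * ((c * y / 2) ^ 2 * exp (-(c * y))) := by
        field_simp
        ring
    _ ≤ 4 / c ^ 2 * (exp (c * y) / exp 1 ^ 2 * exp (-(c * y))) := by gcongr
    _ = 4 / (exp 1 ^ 2 * c ^ 2) := by
        rw [div_mul_eq_mul_div _ _ (exp _), ← exp_add, add_neg_cancel, exp_zero]
        field_simp

theorem exp_neg_le_one_sub_half {x : ℝ} (hx0 : 0 ≤ x) (hx1 : x ≤ 1) : exp (-x) ≤ 1 - x / 2 := by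
  rw [exp_neg, inv_le_iff_one_le_mul₀ (exp_pos x)]
  nlinarith [add_one_le_exp x]

theorem one_div_rpow_one_div_eq_exp {x : ℝ} (hx : 0 < x) :
    (1 / x) ^ (1 / x) = exp (-(log x / x)) := by
  rw [rpow_def_of_pos (by positivity), one_div, log_inv]
  ring_nf

theorem expSchedule_bounds {T : ℕ} (hT : 3 ≤ T) {α κ : ℝ}
    (hα : α = (1 / (T : ℝ)) ^ ((1 : ℝ) / T)) (hκ0 : 0 ≤ κ) (hκ : κ ≤ 1 / 2) :
    0 < α ∧ α < 1 ∧ κ * α * T / log T ≤ κ * α / (1 - α) ∧ κ * α / (1 - α) * α ^ T ≤ 1 := by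
  have hT0 : (0 : ℝ) < T := by positivity
  have hlog : 1 ≤ log T := by
    rw [le_log_iff_exp_le hT0]
    have h3 : (3 : ℝ) ≤ T := by exact_mod_cast hT
    linarith [exp_one_lt_three]
  set x := log T / T
  have hx0 : 0 < x := by positivity
  have hx1 : x ≤ 1 := (div_le_one hT0).2 (by linarith [log_le_sub_one_of_pos hT0])
  have hαx : α = exp (-x) := by rw [hα, one_div_rpow_one_div_eq_exp hT0]
  have hα0 : 0 < α := hαx ▸ exp_pos _
  have hα1 : α < 1 := hαx ▸ exp_lt_one_iff.2 (neg_neg_of_pos hx0)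
  have hαT : α ^ T = 1 / T := by
    rw [hαx, ← exp_nat_mul, mul_neg, mul_div_cancel₀ _ hT0.ne', exp_neg, exp_log hT0, one_div]
  have hup : 1 - α ≤ x := by linarith [hαx ▸ one_sub_le_exp_neg x]
  have hlow : x / 2 ≤ 1 - α := by linarith [hαx ▸ exp_neg_le_one_sub_half hx0.le hx1]
  refine ⟨hα0, hα1, ?_, ?_⟩
  · calc κ * α * T / log T = κ * α / x := by simp only [x]; field_simp
      _ ≤ κ * α / (1 - α) := div_le_div_of_nonneg_left (by positivity) (by linarith) hup
  · rw [hαT, mul_one_div, div_div, div_le_one (by nlinarith)]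
    have hxT : x * T = log T := div_mul_cancel₀ _ hT0.ne'
    nlinarith [mul_le_of_le_one_right hκ0 hα1.le]

theorem prod_one_sub_expSchedule_le {T : ℕ} (hT : 3 ≤ T) {α κ : ℝ}
    (hα : α = (1 / (T : ℝ)) ^ ((1 : ℝ) / T)) (hκ0 : 0 ≤ κ) (hκ : κ ≤ 1 / 2) :
    ∏ t ∈ Ioc 0 T, (1 - κ * α ^ t) ≤ exp 1 * exp (-(κ * α * T / log T)) := by
  obtain ⟨hα0, hα1, hrate, hrateT⟩ := expSchedule_bounds hT hα hκ0 hκ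
  calc ∏ t ∈ Ioc 0 T, (1 - κ * α ^ t) ≤ exp (κ * α / (1 - α) * (α ^ T - α ^ 0)) :=
        prod_one_sub_mul_pow_le (by linarith) hα0.le hα1 T.zero_le
    _ ≤ exp (1 + -(κ * α * T / log T)) := by
        rw [pow_zero]
        gcongr
        linarith
    _ = exp 1 * exp (-(κ * α * T / log T)) := exp_add _ _

theorem sum_sq_expSchedule_mul_prod_le {T : ℕ} (hT : 3 ≤ T) {α κ : ℝ}
    (hα : α = (1 / (T : ℝ)) ^ ((1 : ℝ) / T)) (hκ0 : 0 < κ) (hκ : κ ≤ 1 / 2) :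
    ∑ t ∈ Ioc 0 T, (α ^ t) ^ 2 * ∏ j ∈ Ioc t T, (1 - κ * α ^ j) ≤
      4 / (exp 1 * κ ^ 2) * log T ^ 2 / (α ^ 2 * T) := by
  obtain ⟨hα0, hα1, hrate, hrateT⟩ := expSchedule_bounds hT hα hκ0.le hκ
  set c := κ * α / (1 - α)
  have hT0 : (0 : ℝ) < T := by positivity
  have hlog : 0 < log T := log_pos (by exact_mod_cast (by omega : 1 < T))
  have hterm : ∀ t ∈ Ioc 0 T, (α ^ t) ^ 2 * ∏ j ∈ Ioc t T, (1 - κ * α ^ j) ≤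
      4 / (exp 1 * (κ * α * T / log T) ^ 2) := by
    intro t ht
    calc (α ^ t) ^ 2 * ∏ j ∈ Ioc t T, (1 - κ * α ^ j)
        ≤ (α ^ t) ^ 2 * exp (c * (α ^ T - α ^ t)) := by
          gcongr
          exact prod_one_sub_mul_pow_le (by linarith) hα0.le hα1 (mem_Ioc.1 ht).2
      _ = exp (c * α ^ T) * ((α ^ t) ^ 2 * exp (-(c * α ^ t))) := by
          rw [mul_sub, sub_eq_add_neg, exp_add]
          ring
      _ ≤ exp 1 * (4 / (exp 1 ^ 2 * c ^ 2)) := by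
          gcongr
          exact sq_mul_exp_neg_le (by positivity) (by positivity)
      _ = 4 / (exp 1 * c ^ 2) := by
          field_simp
      _ ≤ 4 / (exp 1 * (κ * α * T / log T) ^ 2) := by
          gcongr
  calc _ ≤ (Ioc 0 T).card • (4 / (exp 1 * (κ * α * T / log T) ^ 2)) :=
        sum_le_card_nsmul _ _ _ hterm
    _ = _ := by
        rw [Nat.card_Ioc, nsmul_eq_mul, Nat.sub_zero]
        field_simp

theorem sum_noise_expSchedule_le {T : ℕ} (hT : 3 ≤ T) {α η₀ β V : ℝ}
    (hα : α = (1 / (T : ℝ)) ^ ((1 : ℝ) / T)) (hη₀ : 0 < η₀) (hβ : 0 < β) (hκ : η₀ * β ≤ 1 / 2)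
    (hV : 0 ≤ V) :
    ∑ t ∈ Ioc 0 T, 2 * (η₀ * α ^ t) ^ 2 * V * ∏ j ∈ Ioc t T, (1 - η₀ * β * α ^ j) ≤
      8 * V / (exp 1 * β ^ 2) * log T ^ 2 / (α ^ 2 * T) := by
  calc _ = 2 * η₀ ^ 2 * V *
        ∑ t ∈ Ioc 0 T, (α ^ t) ^ 2 * ∏ j ∈ Ioc t T, (1 - η₀ * β * α ^ j) := by
        rw [mul_sum]
        exact sum_congr rfl fun t _ => by ring
    _ ≤ 2 * η₀ ^ 2 * V * (4 / (exp 1 * (η₀ * β) ^ 2) * log T ^ 2 / (α ^ 2 * T)) := by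
        gcongr
        exact sum_sq_expSchedule_mul_prod_le hT hα (by positivity) hκ
    _ = _ := by
        field_simp
        ring

end Schedule


theorem td0_iid_exponential_step_general
    {S : Type*} [Fintype S] [MeasurableSpace S] {d : ℕ}
    (P : S → S → ℝ) (μ : S → ℝ) (φ : S → EuclideanSpace ℝ (Fin d))
    (r : S → ℝ) (γ ω : ℝ) (wstar : EuclideanSpace ℝ (Fin d))
    (hP : ∀ s s', 0 ≤ P s s') (hProw : ∀ s, ∑ s', P s s' = 1)
    (hμ : ∀ s, 0 ≤ μ s) (hμsum : ∑ s, μ s = 1)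
    (hstat : ∀ s', ∑ s, μ s * P s s' = μ s')
    (hφ : ∀ s, ‖φ s‖ ≤ 1)
    (hγ : 0 < γ ∧ γ ≤ 1) (hω : 0 < ω ∧ ω ≤ 1)
    (hcov : ∀ v : EuclideanSpace ℝ (Fin d), ω * ‖v‖ ^ 2 ≤ ∑ s, μ s * ⟪v, φ s⟫ ^ 2)
    (hstar : meanDir P μ φ r γ wstar = 0)
    -- horizon and step-size schedule
    (T : ℕ) (hT : 3 ≤ T)
    (α η₀ : ℝ)
    (hα : α = (1 / (T : ℝ)) ^ ((1 : ℝ) / (T : ℝ)))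
    (hη₀ : η₀ = (1 - γ) / 8)
    -- the law ℙ of the i.i.d. sample path `(s_t, s_t')_{t ≥ 1}`
    (ℙ : Measure (ℕ → S × S)) [IsProbabilityMeasure ℙ]
    (hiid : ∀ (n : ℕ) (q : ℕ → S × S),
      ℙ {σ | ∀ i, 1 ≤ i → i ≤ n → σ i = q i} =
        ∏ i ∈ Finset.Icc 1 n, ENNReal.ofReal (μ (q i).1 * P (q i).1 (q i).2))
    -- the TD(0) iterates along a sample path, with step-sizes `η_t = η₀ α^t`
    (w1 : EuclideanSpace ℝ (Fin d)) (w : ℕ → (ℕ → S × S) → EuclideanSpace ℝ (Fin d))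
    (hw1 : ∀ σ, w 1 σ = w1)
    (hrec : ∀ t, 1 ≤ t → ∀ σ,
      w (t + 1) σ = w t σ + (η₀ * α ^ t) • tdDir φ r γ (σ t).1 (σ t).2 (w t σ)) :
    ∫ σ, ‖w (T + 1) σ - wstar‖ ^ 2 ∂ℙ ≤
      Real.exp 1 * ‖w1 - wstar‖ ^ 2 *
          Real.exp (-(η₀ * ω * (1 - γ) * α * T / Real.log T)) +
        (8 * (∑ s, ∑ s', μ s * P s s' * ‖tdDir φ r γ s s' wstar‖ ^ 2) /
            (Real.exp 1 * (ω * (1 - γ)) ^ 2)) *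
          (Real.log T) ^ 2 / (α ^ 2 * T) := by
  obtain ⟨hγ0, hγ1⟩ := hγ
  obtain ⟨hω0, hω1⟩ := hω
  have hη₀0 : 0 ≤ η₀ := by rw [hη₀]; linarith
  have hβ0 : 0 ≤ ω * (1 - γ) := mul_nonneg hω0.le (sub_nonneg.2 hγ1)
  have hκ : η₀ * (ω * (1 - γ)) ≤ 1 / 2 := by nlinarith
  obtain ⟨hα0, hα1, -, -⟩ := expSchedule_bounds hT hα (by positivity) hκ
  have hstep : ∀ t, 8 * (η₀ * α ^ t) ≤ 1 - γ := fun t => by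
    nlinarith [mul_le_of_le_one_right hη₀0 (pow_le_one₀ hα0.le hα1.le : α ^ t ≤ 1)]
  have hfin := integral_norm_td0_iterate_sub_sq_le hP hProw hμ hμsum hstat hφ hγ0.le hγ1 hω1
    hcov hstar (fun t => by positivity) hstep hiid hw1 hrec T
  simp only [mul_right_comm η₀ (α ^ _) (ω * (1 - γ))] at hfin
  set V := ∑ s, ∑ s', μ s * P s s' * ‖tdDir φ r γ s s' wstar‖ ^ 2
  have hnoise : ∑ t ∈ Ioc 0 T,
      2 * (η₀ * α ^ t) ^ 2 * V * ∏ j ∈ Ioc t T, (1 - η₀ * (ω * (1 - γ)) * α ^ j) ≤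
      8 * V / (Real.exp 1 * (ω * (1 - γ)) ^ 2) * Real.log T ^ 2 / (α ^ 2 * T) := by
    rcases hγ1.lt_or_eq with hγ1 | rfl
    · exact sum_noise_expSchedule_le hT hα (by rw [hη₀]; linarith) (by nlinarith) hκ
        (sum_nonneg fun s _ => sum_nonneg fun s' _ => by have := hμ s; have := hP s s'; positivity)
    · simp [hη₀]
  refine (hfin.trans (add_le_add (mul_le_mul_of_nonneg_right
    (prod_one_sub_expSchedule_le hT hα (by positivity) hκ) (sq_nonneg _)) hnoise)).trans_eq ?_
  rw [← mul_assoc η₀ ω]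
  ring

/-- last-iterate convergence of TD(0) with exponentially decaying
step-sizes `η_t = η₀ α^t`, `α = (1/T)^{1/T}`, `η₀ = (1−γ)/8`, under i.i.d. sampling:
`E[‖w_{T+1} − w*‖²] ≤ e ‖w_1 − w*‖² exp(−η₀ω(1−γ)αT/ln T)
  + (8σ²/(e(ω(1−γ))²)) (ln T)²/(α²T)`. -/
theorem td0_iid_exponential_step
    {S : Type*} [Fintype S] [MeasurableSpace S] {d : ℕ}
    (P : S → S → ℝ) (μ : S → ℝ) (φ : S → EuclideanSpace ℝ (Fin d))
    (r : S → ℝ) (γ ω : ℝ) (wstar : EuclideanSpace ℝ (Fin d))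
    (hP : ∀ s s', 0 ≤ P s s') (hProw : ∀ s, ∑ s', P s s' = 1)
    (hμ : ∀ s, 0 ≤ μ s) (hμsum : ∑ s, μ s = 1)
    (hstat : ∀ s', ∑ s, μ s * P s s' = μ s')
    (hφ : ∀ s, ‖φ s‖ ≤ 1)
    (hr : ∀ s, 0 ≤ r s ∧ r s ≤ 1)
    (hγ : 0 < γ ∧ γ ≤ 1) (hω : 0 < ω ∧ ω ≤ 1)
    (hcov : ∀ v : EuclideanSpace ℝ (Fin d), ω * ‖v‖ ^ 2 ≤ ∑ s, μ s * ⟪v, φ s⟫ ^ 2)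
    (hstar : meanDir P μ φ r γ wstar = 0)
    -- horizon and step-size schedule
    (T : ℕ) (hT : 3 ≤ T)
    (α η₀ : ℝ)
    (hα : α = (1 / (T : ℝ)) ^ ((1 : ℝ) / (T : ℝ)))
    (hη₀ : η₀ = (1 - γ) / 8)
    -- the law ℙ of the i.i.d. sample path `(s_t, s_t')_{t ≥ 1}`
    (ℙ : Measure (ℕ → S × S)) [IsProbabilityMeasure ℙ]
    (hiid : ∀ (n : ℕ) (q : ℕ → S × S),
      ℙ {σ | ∀ i, 1 ≤ i → i ≤ n → σ i = q i} =
        ∏ i ∈ Finset.Icc 1 n, ENNReal.ofReal (μ (q i).1 * P (q i).1 (q i).2))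
    -- the TD(0) iterates along a sample path, with step-sizes `η_t = η₀ α^t`
    (w1 : EuclideanSpace ℝ (Fin d)) (w : ℕ → (ℕ → S × S) → EuclideanSpace ℝ (Fin d))
    (hw1 : ∀ σ, w 1 σ = w1)
    (hrec : ∀ t, 1 ≤ t → ∀ σ,
      w (t + 1) σ = w t σ + (η₀ * α ^ t) • tdDir φ r γ (σ t).1 (σ t).2 (w t σ)) :
    ∫ σ, ‖w (T + 1) σ - wstar‖ ^ 2 ∂ℙ ≤
      Real.exp 1 * ‖w1 - wstar‖ ^ 2 *
          Real.exp (-(η₀ * ω * (1 - γ) * α * T / Real.log T)) +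
        (8 * (∑ s, ∑ s', μ s * P s s' * ‖tdDir φ r γ s s' wstar‖ ^ 2) /
            (Real.exp 1 * (ω * (1 - γ)) ^ 2)) *
          (Real.log T) ^ 2 / (α ^ 2 * T) :=
  td0_iid_exponential_step_general P μ φ r γ ω wstar hP hProw hμ hμsum hstat hφ hγ hω hcov hstar T
    hT α η₀ hα hη₀ ℙ hiid w1 w hw1 hrec
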